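/- arXiv:1501.05794 — 2 statements merged into one kernel-verified Lean document; each statement's English description precedes it below -/
import Mathlib

section
/- Let P be a nonzero univariate real polynomial and a ∈ ℝ with −1 < deg(P)·a < 1. Then the scalar weight |P(x)|^a satisfies the A₂ condition on [0,1): sup over intervals I ⊂ [0,1) of (|I|^{−1}∫_I |P|^a dx)(|I|^{−1}∫_I |P|^{−a} dx) < ∞. -/
/-!
Write `|P| = |Q| · ∏ |x - r| ^ mᵣ` over the real roots `r` of `P` (with multiplicities `mᵣ`), where
`Q` has no real zero, so that `|Q| ^ (±a)` is bounded on `[0, 1]` and only the root part matters.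
A single power `|x - r| ^ γ` with `|γ| < 1` is an A₂ weight on `ℝ` with constant `4 / (1 - |γ|)`:
on an interval far from `r` it is essentially constant, and on an interval near `r` the integrable
singularity of `|x - r| ^ (-|γ|)` only costs a factor comparable to the length of the interval.
The root part is the weighted geometric mean `∏ (|x - r| ^ (k a)) ^ (mᵣ / k)`, `k = ∑ mᵣ ≤ deg P`,
and by Hölder's inequality A₂ weights with a common constant are closed under weighted geometric
means; `k |a| < 1` makes every factor an A₂ weight.
-/

open MeasureTheory Real Set

section Holder

variable {α ι : Type*} [MeasurableSpace α] {μ : Measure α} {s : Finset ι} {f : ι → α → ℝ}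
  {p : ι → ℝ}

theorem lintegral_ofReal_prod_rpow_le (hf0 : ∀ i ∈ s, ∀ x, 0 ≤ f i x)
    (hf : ∀ i ∈ s, Integrable (f i) μ) (hp : ∑ i ∈ s, p i = 1) (hp0 : ∀ i ∈ s, 0 ≤ p i) :
    ∫⁻ x, ENNReal.ofReal (∏ i ∈ s, f i x ^ p i) ∂μ ≤
      ∏ i ∈ s, ENNReal.ofReal (∫ x, f i x ∂μ) ^ p i := by
  calc ∫⁻ x, ENNReal.ofReal (∏ i ∈ s, f i x ^ p i) ∂μ
      = ∫⁻ x, ∏ i ∈ s, ENNReal.ofReal (f i x) ^ p i ∂μ := by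
        refine lintegral_congr fun x => ?_
        rw [ENNReal.ofReal_prod_of_nonneg fun i hi => rpow_nonneg (hf0 i hi x) _]
        exact Finset.prod_congr rfl fun i hi =>
          (ENNReal.ofReal_rpow_of_nonneg (hf0 i hi x) (hp0 i hi)).symm
    _ ≤ ∏ i ∈ s, (∫⁻ x, ENNReal.ofReal (f i x) ∂μ) ^ p i :=
        ENNReal.lintegral_prod_norm_pow_le s
          (fun i hi => (hf i hi).aemeasurable.ennreal_ofReal) hp hp0
    _ = ∏ i ∈ s, ENNReal.ofReal (∫ x, f i x ∂μ) ^ p i := by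
        refine Finset.prod_congr rfl fun i hi => ?_
        rw [ofReal_integral_eq_lintegral_ofReal (hf i hi) (ae_of_all _ (hf0 i hi))]

theorem integrable_prod_rpow (hf0 : ∀ i ∈ s, ∀ x, 0 ≤ f i x)
    (hf : ∀ i ∈ s, Integrable (f i) μ) (hp : ∑ i ∈ s, p i = 1) (hp0 : ∀ i ∈ s, 0 ≤ p i) :
    Integrable (fun x => ∏ i ∈ s, f i x ^ p i) μ := by
  have hmeas : AEStronglyMeasurable (fun x => ∏ i ∈ s, f i x ^ p i) μ :=
    Finset.aestronglyMeasurable_fun_prod s fun i hi =>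
      ((hf i hi).aemeasurable.pow_const (p i)).aestronglyMeasurable
  refine ⟨hmeas, (hasFiniteIntegral_iff_ofReal (ae_of_all _ fun x =>
    Finset.prod_nonneg fun i hi => rpow_nonneg (hf0 i hi x) _)).2 ?_⟩
  refine (lintegral_ofReal_prod_rpow_le hf0 hf hp hp0).trans_lt (lt_top_iff_ne_top.2 ?_)
  exact ENNReal.prod_ne_top fun i hi =>
    ENNReal.rpow_ne_top_of_nonneg (hp0 i hi) ENNReal.ofReal_ne_top

theorem integral_prod_rpow_le (hf0 : ∀ i ∈ s, ∀ x, 0 ≤ f i x)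
    (hf : ∀ i ∈ s, Integrable (f i) μ) (hp : ∑ i ∈ s, p i = 1) (hp0 : ∀ i ∈ s, 0 ≤ p i) :
    ∫ x, ∏ i ∈ s, f i x ^ p i ∂μ ≤ ∏ i ∈ s, (∫ x, f i x ∂μ) ^ p i := by
  have hint := integrable_prod_rpow hf0 hf hp hp0
  have h0 : 0 ≤ᵐ[μ] fun x => ∏ i ∈ s, f i x ^ p i :=
    ae_of_all _ fun x => Finset.prod_nonneg fun i hi => rpow_nonneg (hf0 i hi x) _
  rw [integral_eq_lintegral_of_nonneg_ae h0 hint.aestronglyMeasurable]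
  refine (ENNReal.toReal_mono ?_ (lintegral_ofReal_prod_rpow_le hf0 hf hp hp0)).trans_eq ?_
  · exact ENNReal.prod_ne_top fun i hi =>
      ENNReal.rpow_ne_top_of_nonneg (hp0 i hi) ENNReal.ofReal_ne_top
  · rw [ENNReal.toReal_prod]
    refine Finset.prod_congr rfl fun i hi => ?_
    rw [← ENNReal.toReal_rpow, ENNReal.toReal_ofReal (integral_nonneg (hf0 i hi))]

theorem setAverage_prod_rpow_le {I : Set α} (hf0 : ∀ i ∈ s, ∀ x, 0 ≤ f i x)
    (hf : ∀ i ∈ s, IntegrableOn (f i) I μ) (hp : ∑ i ∈ s, p i = 1) (hp0 : ∀ i ∈ s, 0 ≤ p i) :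
    ⨍ x in I, ∏ i ∈ s, f i x ^ p i ∂μ ≤ ∏ i ∈ s, (⨍ x in I, f i x ∂μ) ^ p i := by
  have hc : 0 ≤ (μ.real I)⁻¹ := inv_nonneg.2 measureReal_nonneg
  simp only [setAverage_eq, smul_eq_mul]
  calc (μ.real I)⁻¹ * ∫ x in I, ∏ i ∈ s, f i x ^ p i ∂μ
      ≤ (μ.real I)⁻¹ * ∏ i ∈ s, (∫ x in I, f i x ∂μ) ^ p i :=
        mul_le_mul_of_nonneg_left (integral_prod_rpow_le hf0 hf hp hp0) hc
    _ = ∏ i ∈ s, ((μ.real I)⁻¹ * ∫ x in I, f i x ∂μ) ^ p i := by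
        rw [Finset.prod_congr rfl fun i hi => mul_rpow hc (integral_nonneg (hf0 i hi)),
          Finset.prod_mul_distrib, ← rpow_sum_of_nonneg hc hp0, hp, rpow_one]

end Holder

section A2

variable {α ι : Type*} [MeasurableSpace α] {μ : Measure α}

def A2Bound (μ : Measure α) (w : α → ℝ) (I : Set α) (C : ℝ) : Prop :=
  IntegrableOn w I μ ∧ IntegrableOn (fun x => (w x)⁻¹) I μ ∧
    (⨍ x in I, w x ∂μ) * ⨍ x in I, (w x)⁻¹ ∂μ ≤ C

theorem setAverage_nonneg_of_nonneg {f : α → ℝ} {I : Set α} (hf : ∀ x, 0 ≤ f x) :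
    0 ≤ ⨍ x in I, f x ∂μ := by
  rw [setAverage_eq]
  exact smul_nonneg (inv_nonneg.2 measureReal_nonneg) (integral_nonneg hf)

theorem setAverage_le_mul_setAverage {f g : α → ℝ} {I : Set α} {M : ℝ} (hI : MeasurableSet I)
    (hf : ∀ x ∈ I, 0 ≤ f x) (hg : IntegrableOn g I μ) (hfg : ∀ x ∈ I, f x ≤ M * g x) :
    ⨍ x in I, f x ∂μ ≤ M * ⨍ x in I, g x ∂μ := by
  rw [setAverage_eq, setAverage_eq, smul_eq_mul, smul_eq_mul, mul_left_comm,
    ← integral_const_mul M]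
  refine mul_le_mul_of_nonneg_left ?_ (inv_nonneg.2 measureReal_nonneg)
  exact integral_mono_of_nonneg ((ae_restrict_iff' hI).2 (ae_of_all _ hf)) (hg.const_mul M)
    ((ae_restrict_iff' hI).2 (ae_of_all _ hfg))

theorem A2Bound.inv {w : α → ℝ} {I : Set α} {C : ℝ} (h : A2Bound μ w I C) :
    A2Bound μ (fun x => (w x)⁻¹) I C := by
  obtain ⟨hw, hw', hC⟩ := h
  refine ⟨hw', by simpa using hw, ?_⟩
  simpa only [inv_inv, mul_comm] using hC

theorem A2Bound.mul_le {u v : α → ℝ} {I : Set α} {M M' C : ℝ} (hv : A2Bound μ v I C)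
    (hI : MeasurableSet I) (hne : I.Nonempty) (hv0 : ∀ x, 0 ≤ v x) (hu0 : ∀ x, 0 ≤ u x)
    (hu : ∀ x ∈ I, u x ≤ M) (hu' : ∀ x ∈ I, (u x)⁻¹ ≤ M') :
    (⨍ x in I, u x * v x ∂μ) * ⨍ x in I, (u x * v x)⁻¹ ∂μ ≤ M * M' * C := by
  obtain ⟨hvi, hvi', hC⟩ := hv
  obtain ⟨y, hy⟩ := hne
  have hM : 0 ≤ M := (hu0 y).trans (hu y hy)
  have hM' : 0 ≤ M' := (inv_nonneg.2 (hu0 y)).trans (hu' y hy)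
  have h1 : ⨍ x in I, u x * v x ∂μ ≤ M * ⨍ x in I, v x ∂μ :=
    setAverage_le_mul_setAverage hI (fun x _ => mul_nonneg (hu0 x) (hv0 x)) hvi
      fun x hx => mul_le_mul_of_nonneg_right (hu x hx) (hv0 x)
  have h2 : ⨍ x in I, (u x * v x)⁻¹ ∂μ ≤ M' * ⨍ x in I, (v x)⁻¹ ∂μ := by
    simp only [mul_inv]
    exact setAverage_le_mul_setAverage hI
      (fun x _ => mul_nonneg (inv_nonneg.2 (hu0 x)) (inv_nonneg.2 (hv0 x))) hvi'
      fun x hx => mul_le_mul_of_nonneg_right (hu' x hx) (inv_nonneg.2 (hv0 x))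
  calc (⨍ x in I, u x * v x ∂μ) * ⨍ x in I, (u x * v x)⁻¹ ∂μ
      ≤ (M * ⨍ x in I, v x ∂μ) * (M' * ⨍ x in I, (v x)⁻¹ ∂μ) :=
        mul_le_mul h1 h2 (setAverage_nonneg_of_nonneg fun x =>
            inv_nonneg.2 (mul_nonneg (hu0 x) (hv0 x)))
          (mul_nonneg hM (setAverage_nonneg_of_nonneg hv0))
    _ = M * M' * ((⨍ x in I, v x ∂μ) * ⨍ x in I, (v x)⁻¹ ∂μ) := by ring
    _ ≤ M * M' * C := by gcongr

variable {s : Finset ι} {p : ι → ℝ}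

theorem A2Bound.prod_rpow {w : ι → α → ℝ} {I : Set α} {C : ℝ} (hw0 : ∀ i ∈ s, ∀ x, 0 ≤ w i x)
    (hw : ∀ i ∈ s, A2Bound μ (w i) I C) (hp : ∑ i ∈ s, p i = 1) (hp0 : ∀ i ∈ s, 0 ≤ p i) :
    A2Bound μ (fun x => ∏ i ∈ s, w i x ^ p i) I C := by
  have hinv0 : ∀ i ∈ s, ∀ x, 0 ≤ (w i x)⁻¹ := fun i hi x => inv_nonneg.2 (hw0 i hi x)
  have hinv : ∀ x, (∏ i ∈ s, w i x ^ p i)⁻¹ = ∏ i ∈ s, (w i x)⁻¹ ^ p i := fun x => by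
    rw [← Finset.prod_inv_distrib]
    exact Finset.prod_congr rfl fun i hi => (inv_rpow (hw0 i hi x) _).symm
  have hA : ∀ i ∈ s, 0 ≤ ⨍ x in I, w i x ∂μ := fun i hi => setAverage_nonneg_of_nonneg (hw0 i hi)
  have hB : ∀ i ∈ s, 0 ≤ ⨍ x in I, (w i x)⁻¹ ∂μ := fun i hi =>
    setAverage_nonneg_of_nonneg (hinv0 i hi)
  obtain ⟨j, hj⟩ := Finset.nonempty_of_sum_ne_zero (hp.trans_ne one_ne_zero)
  have hC : 0 ≤ C := (mul_nonneg (hA j hj) (hB j hj)).trans (hw j hj).2.2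
  refine ⟨integrable_prod_rpow hw0 (fun i hi => (hw i hi).1) hp hp0, ?_, ?_⟩
  · simp only [hinv]
    exact integrable_prod_rpow hinv0 (fun i hi => (hw i hi).2.1) hp hp0
  simp only [hinv]
  calc (⨍ x in I, ∏ i ∈ s, w i x ^ p i ∂μ) * ⨍ x in I, ∏ i ∈ s, (w i x)⁻¹ ^ p i ∂μ
      ≤ (∏ i ∈ s, (⨍ x in I, w i x ∂μ) ^ p i) * ∏ i ∈ s, (⨍ x in I, (w i x)⁻¹ ∂μ) ^ p i :=
        mul_le_mul (setAverage_prod_rpow_le hw0 (fun i hi => (hw i hi).1) hp hp0)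
          (setAverage_prod_rpow_le hinv0 (fun i hi => (hw i hi).2.1) hp hp0)
          (setAverage_nonneg_of_nonneg fun x =>
            Finset.prod_nonneg fun i hi => rpow_nonneg (hinv0 i hi x) _)
          (Finset.prod_nonneg fun i hi => rpow_nonneg (hA i hi) _)
    _ = ∏ i ∈ s, ((⨍ x in I, w i x ∂μ) * ⨍ x in I, (w i x)⁻¹ ∂μ) ^ p i := by
        rw [← Finset.prod_mul_distrib]
        exact Finset.prod_congr rfl fun i hi => (mul_rpow (hA i hi) (hB i hi)).symm
    _ ≤ ∏ i ∈ s, C ^ p i :=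
        Finset.prod_le_prod (fun i hi => rpow_nonneg (mul_nonneg (hA i hi) (hB i hi)) _)
          fun i hi => rpow_le_rpow (mul_nonneg (hA i hi) (hB i hi)) (hw i hi).2.2 (hp0 i hi)
    _ = C := by rw [← rpow_sum_of_nonneg hC hp0, hp, rpow_one]

end A2

open intervalIntegral in
theorem intervalIntegrable_abs_rpow {γ : ℝ} (hγ : -1 < γ) (a b : ℝ) :
    IntervalIntegrable (fun x => |x| ^ γ) volume a b := by
  have hpos : ∀ c, 0 ≤ c → IntervalIntegrable (fun x => |x| ^ γ) volume 0 c := fun c hc =>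
    (intervalIntegrable_rpow' hγ).congr fun x hx => by
      rw [uIoc_of_le hc] at hx
      simp only [abs_of_pos hx.1]
  have h0 : ∀ c, IntervalIntegrable (fun x => |x| ^ γ) volume 0 c := by
    intro c
    rcases le_total 0 c with hc | hc
    · exact hpos c hc
    · rw [IntervalIntegrable.iff_comp_neg]
      simpa using hpos (-c) (neg_nonneg.2 hc)
  exact (h0 a).symm.trans (h0 b)

theorem integrableOn_abs_sub_rpow_Icc {γ : ℝ} (hγ : -1 < γ) (r a b : ℝ) :
    IntegrableOn (fun x => |x - r| ^ γ) (Icc a b) := by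
  have h := (intervalIntegrable_abs_rpow hγ (a - r) (b - r)).comp_sub_right r
  simp only [sub_add_cancel] at h
  exact ((intervalIntegrable_iff' (by simp)).1 h).mono_set Icc_subset_uIcc

open intervalIntegral in
theorem integral_abs_rpow_symmetric {γ : ℝ} (hγ : -1 < γ) {c : ℝ} (hc : 0 ≤ c) :
    ∫ x in -c..c, |x| ^ γ = 2 * c ^ (γ + 1) / (γ + 1) := by
  have hright : ∫ x in (0)..c, |x| ^ γ = c ^ (γ + 1) / (γ + 1) := by
    have hcongr : EqOn (fun x : ℝ => |x| ^ γ) (fun x => x ^ γ) (uIcc 0 c) := fun x hx => by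
      rw [uIcc_of_le hc] at hx
      simp only [abs_of_nonneg hx.1]
    rw [integral_congr hcongr, integral_rpow (Or.inl hγ), zero_rpow (by linarith), sub_zero]
  have hleft : ∫ x in -c..0, |x| ^ γ = ∫ x in (0)..c, |x| ^ γ := by
    simpa using (integral_comp_neg (a := 0) (b := c) fun x => |x| ^ γ).symm
  rw [← integral_add_adjacent_intervals (intervalIntegrable_abs_rpow hγ _ _)
    (intervalIntegrable_abs_rpow hγ _ _), hleft, hright]
  ring

open intervalIntegral in
theorem setIntegral_abs_sub_rpow_le_of_subset_Icc {γ : ℝ} (hγ : -1 < γ) {r D : ℝ} (hD : 0 ≤ D)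
    {I : Set ℝ} (hI : I ⊆ Icc (r - D) (r + D)) :
    ∫ x in I, |x - r| ^ γ ≤ 2 * D ^ (γ + 1) / (γ + 1) := by
  calc ∫ x in I, |x - r| ^ γ ≤ ∫ x in Icc (r - D) (r + D), |x - r| ^ γ :=
        setIntegral_mono_set (integrableOn_abs_sub_rpow_Icc hγ r _ _)
          (ae_of_all _ fun x => rpow_nonneg (abs_nonneg _) _) hI.eventuallyLE
    _ = ∫ x in -D..D, |x| ^ γ := by
        rw [integral_Icc_eq_integral_Ioc, ← integral_of_le (by linarith),
          integral_comp_sub_right (fun x => |x| ^ γ)]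
        simp
    _ = 2 * D ^ (γ + 1) / (γ + 1) := integral_abs_rpow_symmetric hγ hD

theorem setIntegral_Ico_le_of_le {f : ℝ → ℝ} {B s t : ℝ} (hst : s ≤ t)
    (hf : ∀ x ∈ Ico s t, 0 ≤ f x) (hB : ∀ x ∈ Ico s t, f x ≤ B) :
    ∫ x in Ico s t, f x ≤ (t - s) * B := by
  have h := norm_setIntegral_le_of_norm_le_const (μ := volume) measure_Ico_lt_top
    fun x hx => (norm_of_nonneg (hf x hx)).trans_le (hB x hx)
  rw [volume_real_Ico_of_le hst, mul_comm] at h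
  exact (le_abs_self _).trans h

theorem abs_sub_le_max_of_mem_Ico {r s t x : ℝ} (hx : x ∈ Ico s t) :
    |x - r| ≤ max |s - r| |t - r| :=
  abs_le_max_abs_abs (sub_le_sub_right hx.1 r) (sub_le_sub_right hx.2.le r)

theorem sub_le_two_mul_max_abs_sub (r s t : ℝ) : t - s ≤ 2 * max |s - r| |t - r| := by
  linarith [le_abs_self (t - r), neg_abs_le (s - r), le_max_left |s - r| |t - r|,
    le_max_right |s - r| |t - r|]

theorem setIntegral_Ico_abs_sub_rpow_neg_le {e : ℝ} (he0 : 0 ≤ e) (he1 : e < 1) (r : ℝ) {s t : ℝ}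
    (hst : s < t) :
    ∫ x in Ico s t, |x - r| ^ (-e) ≤ 4 / (1 - e) * (t - s) * max |s - r| |t - r| ^ (-e) := by
  set D := max |s - r| |t - r|
  have hLD : t - s ≤ 2 * D := sub_le_two_mul_max_abs_sub r s t
  have hD : 0 < D := by linarith
  rcases le_or_gt D (2 * (t - s)) with hnear | hfar
  · have hsub : Ico s t ⊆ Icc (r - D) (r + D) := fun x hx => by
      have := abs_le.1 (abs_sub_le_max_of_mem_Ico (r := r) hx)
      constructor <;> linarith
    calc ∫ x in Ico s t, |x - r| ^ (-e) ≤ 2 * D ^ (-e + 1) / (-e + 1) :=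
          setIntegral_abs_sub_rpow_le_of_subset_Icc (by linarith) hD.le hsub
      _ = 2 / (1 - e) * D * D ^ (-e) := by
          rw [rpow_add hD, rpow_one, neg_add_eq_sub]; ring
      _ ≤ 2 / (1 - e) * (2 * (t - s)) * D ^ (-e) := by gcongr
      _ = 4 / (1 - e) * (t - s) * D ^ (-e) := by ring
  · have hpt : ∀ x ∈ Ico s t, |x - r| ^ (-e) ≤ 4 / (1 - e) * D ^ (-e) := fun x hx => by
      have hsx : |s - x| ≤ t - s := abs_sub_le_iff.2 ⟨by linarith [hx.1], by linarith [hx.2]⟩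
      have htx : |t - x| ≤ t - s := abs_sub_le_iff.2 ⟨by linarith [hx.1], by linarith [hx.2]⟩
      have hxr : D / 2 ≤ |x - r| := by
        have : D ≤ (t - s) + |x - r| :=
          max_le (by linarith [abs_sub_le s x r]) (by linarith [abs_sub_le t x r])
        linarith
      calc |x - r| ^ (-e) ≤ (D / 2) ^ (-e) :=
            rpow_le_rpow_of_nonpos (by positivity) hxr (by linarith)
        _ = 2 ^ e * D ^ (-e) := by
            rw [div_rpow hD.le zero_le_two, rpow_neg zero_le_two, div_inv_eq_mul, mul_comm]
        _ ≤ 2 * D ^ (-e) := by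
            gcongr
            simpa using rpow_le_rpow_of_exponent_le one_le_two he1.le
        _ ≤ 4 / (1 - e) * D ^ (-e) := by
            gcongr
            rw [le_div_iff₀ (by linarith)]
            linarith
    calc ∫ x in Ico s t, |x - r| ^ (-e) ≤ (t - s) * (4 / (1 - e) * D ^ (-e)) :=
          setIntegral_Ico_le_of_le hst.le (fun x _ => rpow_nonneg (abs_nonneg _) _) hpt
      _ = 4 / (1 - e) * (t - s) * D ^ (-e) := by ring

theorem setAverage_Ico {f : ℝ → ℝ} {s t : ℝ} (hst : s ≤ t) :
    ⨍ x in Ico s t, f x = (t - s)⁻¹ * ∫ x in Ico s t, f x := by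
  rw [setAverage_eq, volume_real_Ico_of_le hst, smul_eq_mul]

theorem a2Bound_abs_sub_rpow_of_nonneg {e : ℝ} (he0 : 0 ≤ e) (he1 : e < 1) (r : ℝ) {s t : ℝ}
    (hst : s < t) : A2Bound volume (fun x => |x - r| ^ e) (Ico s t) (4 / (1 - e)) := by
  have hinv : ∀ x, (|x - r| ^ e)⁻¹ = |x - r| ^ (-e) := fun x => (rpow_neg (abs_nonneg _) e).symm
  simp only [A2Bound, hinv]
  refine ⟨(integrableOn_abs_sub_rpow_Icc (by linarith) r s t).mono_set Ico_subset_Icc_self,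
    (integrableOn_abs_sub_rpow_Icc (by linarith) r s t).mono_set Ico_subset_Icc_self, ?_⟩
  set D := max |s - r| |t - r|
  have hD : 0 < D := by linarith [sub_le_two_mul_max_abs_sub r s t]
  have hpos : ∫ x in Ico s t, |x - r| ^ e ≤ (t - s) * D ^ e :=
    setIntegral_Ico_le_of_le hst.le (fun x _ => rpow_nonneg (abs_nonneg _) _)
      fun x hx => rpow_le_rpow (abs_nonneg _) (abs_sub_le_max_of_mem_Ico hx) he0
  rw [setAverage_Ico hst.le, setAverage_Ico hst.le]
  calc ((t - s)⁻¹ * ∫ x in Ico s t, |x - r| ^ e) * ((t - s)⁻¹ * ∫ x in Ico s t, |x - r| ^ (-e))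
      ≤ ((t - s)⁻¹ * ((t - s) * D ^ e)) * ((t - s)⁻¹ * (4 / (1 - e) * (t - s) * D ^ (-e))) := by
        gcongr
        exact setIntegral_Ico_abs_sub_rpow_neg_le he0 he1 r hst
    _ = 4 / (1 - e) := by
        rw [rpow_neg hD.le]
        field_simp [(sub_pos.2 hst).ne', (rpow_pos_of_pos hD e).ne']

theorem a2Bound_abs_sub_rpow {γ : ℝ} (hγ : |γ| < 1) (r : ℝ) {s t : ℝ} (hst : s < t) :
    A2Bound volume (fun x => |x - r| ^ γ) (Ico s t) (4 / (1 - |γ|)) := by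
  rcases le_total 0 γ with h | h
  · rw [abs_of_nonneg h] at hγ ⊢
    exact a2Bound_abs_sub_rpow_of_nonneg h hγ r hst
  · rw [abs_of_nonpos h] at hγ ⊢
    have := (a2Bound_abs_sub_rpow_of_nonneg (neg_nonneg.2 h) hγ r hst).inv
    simpa only [rpow_neg (abs_nonneg _), inv_inv] using this

theorem a2Bound_prod_abs_sub_rpow (R : Multiset ℝ) {a : ℝ} (ha : R.card * |a| < 1) {s t : ℝ}
    (hst : s < t) :
    A2Bound volume (fun x => ∏ r ∈ R.toFinset, |x - r| ^ (R.count r * a)) (Ico s t)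
      (4 / (1 - R.card * |a|)) := by
  rcases eq_or_ne R 0 with rfl | hR
  · simp only [A2Bound, Multiset.toFinset_zero, Finset.prod_empty, inv_one,
      setAverage_const (by simp [hst] : volume (Ico s t) ≠ 0) measure_Ico_lt_top.ne]
    refine ⟨integrableOn_const measure_Ico_lt_top.ne, integrableOn_const measure_Ico_lt_top.ne, ?_⟩
    norm_num
  have hk : (0 : ℝ) < R.card := by exact_mod_cast Multiset.card_pos.2 hR
  have hpow : ∀ x, ∏ r ∈ R.toFinset, |x - r| ^ (R.count r * a) =
      ∏ r ∈ R.toFinset, (|x - r| ^ (R.card * a)) ^ (R.count r / R.card : ℝ) := fun x =>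
    Finset.prod_congr rfl fun r _ => by
      rw [← rpow_mul (abs_nonneg _)]
      congr 1
      field_simp
  simp only [hpow]
  refine A2Bound.prod_rpow (fun r _ x => rpow_nonneg (abs_nonneg _) _) (fun r _ => ?_) ?_
    fun r _ => by positivity
  · have habs : |(R.card : ℝ) * a| = R.card * |a| := by rw [abs_mul, abs_of_pos hk]
    have := a2Bound_abs_sub_rpow (γ := R.card * a) (by rwa [habs]) r hst
    rwa [habs] at this
  · rw [← Finset.sum_div, ← Nat.cast_sum, Multiset.toFinset_sum_count_eq, div_self hk.ne']

open Polynomial in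
theorem Polynomial.exists_abs_eval_rpow_eq {P : ℝ[X]} (hP : P ≠ 0) :
    ∃ Q : ℝ[X], (∀ x, Q.eval x ≠ 0) ∧ ∀ (a : ℝ) x, |P.eval x| ^ a =
      |Q.eval x| ^ a * ∏ r ∈ P.roots.toFinset, |x - r| ^ (P.roots.count r * a) := by
  obtain ⟨Q, hPQ, -, hQ⟩ := P.exists_prod_multiset_X_sub_C_mul
  have hQ0 : Q ≠ 0 := by
    rintro rfl
    exact hP (by simpa using hPQ.symm)
  refine ⟨Q, fun x hx => by simpa [hQ] using (mem_roots hQ0).2 hx, fun a x => ?_⟩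
  have habs : |P.eval x| = |Q.eval x| * ∏ r ∈ P.roots.toFinset, |x - r| ^ P.roots.count r := by
    conv_lhs => rw [← hPQ]
    rw [eval_mul, eval_multiset_prod, Multiset.map_map, abs_mul, mul_comm,
      Finset.prod_multiset_map_count, Finset.abs_prod]
    simp [abs_pow]
  rw [habs, mul_rpow (abs_nonneg _) (Finset.prod_nonneg fun r _ => by positivity),
    ← Real.finsetProd_rpow _ _ fun r _ => by positivity]
  congr 1
  exact Finset.prod_congr rfl fun r _ => by rw [← rpow_natCast, ← rpow_mul (abs_nonneg _)]

/-- If `P` is a nonzero real polynomial and `-1 < deg(P)·a < 1`, then the weight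
`|P(x)|^a` satisfies the scalar Muckenhoupt `A₂` condition on `[0,1)`:
`sup_I (|I|⁻¹ ∫_I |P|^a)(|I|⁻¹ ∫_I |P|^{-a}) < ∞` over all subintervals `I ⊆ [0,1)`. -/
theorem polynomial_power_A2 (P : Polynomial ℝ) (hP : P ≠ 0) (a : ℝ)
    (h1 : -1 < (P.natDegree : ℝ) * a) (h2 : (P.natDegree : ℝ) * a < 1) :
    ∃ C : ℝ, ∀ s t : ℝ, 0 ≤ s → s < t → t ≤ 1 →
      ((t - s)⁻¹ * ∫ x in Set.Ico s t, |P.eval x| ^ a) *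
        ((t - s)⁻¹ * ∫ x in Set.Ico s t, |P.eval x| ^ (-a)) ≤ C := by
  obtain ⟨Q, hQ, hPQ⟩ := P.exists_abs_eval_rpow_eq hP
  have hR : (P.roots.card : ℝ) * |a| < 1 :=
    calc (P.roots.card : ℝ) * |a| ≤ P.natDegree * |a| := by
          gcongr
          exact_mod_cast P.card_roots'
      _ = |P.natDegree * a| := by rw [abs_mul, Nat.abs_cast]
      _ < 1 := abs_lt.2 ⟨h1, h2⟩
  have hQbdd : ∀ b : ℝ, ∃ M, ∀ x ∈ Icc (0 : ℝ) 1, |Q.eval x| ^ b ≤ M := fun b => by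
    obtain ⟨M, hM⟩ := isCompact_Icc.bddAbove_image
      (Q.continuous.abs.rpow_const fun x => Or.inl (abs_ne_zero.2 (hQ x))).continuousOn
    exact ⟨M, fun x hx => hM (mem_image_of_mem _ hx)⟩
  obtain ⟨M, hM⟩ := hQbdd a
  obtain ⟨M', hM'⟩ := hQbdd (-a)
  refine ⟨M * M' * (4 / (1 - P.roots.card * |a|)), fun s t hs hst ht => ?_⟩
  have hI : Ico s t ⊆ Icc 0 1 := fun x hx => ⟨hs.trans hx.1, hx.2.le.trans ht⟩
  have h := (a2Bound_prod_abs_sub_rpow P.roots hR hst).mul_le measurableSet_Ico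
    (nonempty_Ico.2 hst) (fun x => Finset.prod_nonneg fun r _ => by positivity)
    (fun x => rpow_nonneg (abs_nonneg _) _) (fun x hx => hM x (hI hx))
    fun x hx => by simpa only [rpow_neg (abs_nonneg _)] using hM' x (hI hx)
  rw [← setAverage_Ico hst.le, ← setAverage_Ico hst.le]
  simpa only [rpow_neg (abs_nonneg _), hPQ a] using h
end

section
/- Let g(x) = χ_{[0,1)}(x)|P(x)|^{a/2} where P is a nonzero polynomial and −1 < deg(P)·a < 1, and suppose P has a real zero in [0,1) with a < 0 (so Zg is unbounded), or a > 0 (so |Zg| is not bounded below). Then g ∈ L²(ℝ) and the function |Zg(x,u)|² = |P(x)|^a is in L¹([0,1)²) but either unbounded or not essentially bounded away from zero on [0,1)². -/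
open MeasureTheory Complex Real

/-!
Write `P = Q · ∏ (X - r)` over the real roots `r` of `P`, with `Q` zero-free. Then
`|P|^a = |Q|^a · ∏ |x - r|^a`, where `|Q|^a` is continuous, and for `a < 0` a product of
`D = #roots` nonnegative factors is at most the sum of their `D`-th powers `|x - r|^(D a)`,
which are locally integrable because `D a ≥ deg P · a > -1`. Near a zero `x₀ ∈ [0,1)` of `P`,
`|P|` is small on a set `[x₀, x₀ + δ)` of positive measure, so there `|P|^a` is large when
`a < 0` (away from the finitely many roots) and small when `a > 0`. Since `F` depends only on
the first coordinate, these one-dimensional facts transfer to the square.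
-/
theorem locallyIntegrable_abs_sub_rpow {s : ℝ} (hs : -1 < s) (r : ℝ) :
    LocallyIntegrable (fun x : ℝ => |x - r| ^ s) := by
  have h0 : LocallyIntegrable (fun x : ℝ => |x| ^ s) :=
    locallyIntegrable_of_norm_le_rpow (μ := volume) (C := 1) (α := -s) (by simp)
      (by rw [Module.finrank_self, Nat.cast_one]; linarith)
      (.of_forall fun x => by simp [abs_of_nonneg (rpow_nonneg (abs_nonneg x) s)])
      (continuous_abs.measurable.pow_const s).aestronglyMeasurable
  rw [← map_sub_right_eq_self volume r] at h0
  exact (locallyIntegrable_map_homeomorph (Homeomorph.subRight r)).1 h0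

theorem Multiset.prod_map_le_sum_pow_card {ι : Type*} [DecidableEq ι] {s : Multiset ι}
    (hs : s ≠ 0) (f : ι → ℝ) (hf : ∀ i ∈ s, 0 ≤ f i) :
    (s.map f).prod ≤ ∑ i ∈ s.toFinset, f i ^ card s := by
  obtain ⟨j, hj, hmax⟩ := s.exists_max_image f hs
  calc (s.map f).prod ≤ (s.map fun _ => f j).prod := prod_map_le_prod_map₀ _ _ hf hmax
    _ = f j ^ card s := by simp
    _ ≤ ∑ i ∈ s.toFinset, f i ^ card s :=
      Finset.single_le_sum (fun i hi => pow_nonneg (hf i (mem_toFinset.1 hi)) _)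
        (mem_toFinset.2 hj)

theorem Polynomial.exists_abs_eval_eq_prod_roots_mul {P : Polynomial ℝ} (hP : P ≠ 0) :
    ∃ Q : Polynomial ℝ, (∀ x, Q.eval x ≠ 0) ∧
      ∀ x, |P.eval x| = (P.roots.map fun r => |x - r|).prod * |Q.eval x| := by
  obtain ⟨Q, hPQ, -, hQroots⟩ := P.exists_prod_multiset_X_sub_C_mul
  have hQ : Q ≠ 0 := by rintro rfl; exact hP (by simpa using hPQ.symm)
  refine ⟨Q, fun x hx => ?_, fun x => ?_⟩
  · simpa [hQroots] using (mem_roots hQ).2 hx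
  · conv_lhs => rw [← hPQ]
    simp [eval_multiset_prod, Multiset.map_map, abs_mul,
      show ∀ m : Multiset ℝ, |m.prod| = (m.map abs).prod from map_multiset_prod absHom]

theorem Polynomial.locallyIntegrable_abs_eval_rpow {P : Polynomial ℝ} (hP : P ≠ 0) {a : ℝ}
    (ha : -1 < P.natDegree * a) : LocallyIntegrable (fun x => |P.eval x| ^ a) := by
  rcases le_or_gt 0 a with ha₀ | ha₀
  · exact (P.continuous.abs.rpow_const fun _ => Or.inr ha₀).locallyIntegrable
  obtain ⟨Q, hQ, hPQ⟩ := P.exists_abs_eval_eq_prod_roots_mul hP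
  set D := Multiset.card P.roots
  have hD : -1 < a * D := by
    have : (D : ℝ) ≤ P.natDegree := by exact_mod_cast P.card_roots'
    nlinarith
  have hfactor : (fun x => |P.eval x| ^ a) =
      fun x => (P.roots.map fun r => |x - r| ^ a).prod * |Q.eval x| ^ a := by
    ext x
    rw [hPQ, mul_rpow (Multiset.prod_map_nonneg fun _ _ => abs_nonneg _) (abs_nonneg _),
      Real.multiset_prod_map_rpow _ _ fun _ _ => abs_nonneg _]
  have hQa : Continuous fun x => |Q.eval x| ^ a :=
    Q.continuous.abs.rpow_const fun x => Or.inl (abs_ne_zero.2 (hQ x))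
  rw [hfactor]
  refine LocallyIntegrable.mul_continuous hQa ?_
  rcases eq_or_ne P.roots 0 with h0 | h0
  · simpa [h0] using locallyIntegrable_const (1 : ℝ)
  have hmeas : AEStronglyMeasurable (fun x => (P.roots.map fun r => |x - r| ^ a).prod) := by
    simpa [Multiset.map_map, Function.comp_def] using
      (P.roots.map fun r x => |x - r| ^ a).aestronglyMeasurable_fun_prod (μ := volume)
        (by
          simp only [Multiset.mem_map]
          rintro _ ⟨r, -, rfl⟩
          exact ((continuous_abs.comp (continuous_sub_right r)).measurable.pow_const
            a).aestronglyMeasurable)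
  classical
  refine (locallyIntegrable_finsetSum P.roots.toFinset
    fun r _ => locallyIntegrable_abs_sub_rpow hD r).mono hmeas (.of_forall fun x => ?_)
  have hprod := P.roots.prod_map_le_sum_pow_card h0 (fun r => |x - r| ^ a)
    fun _ _ => rpow_nonneg (abs_nonneg _) _
  simp only [← rpow_mul_natCast (abs_nonneg _)] at hprod
  rw [Real.norm_of_nonneg (Multiset.prod_map_nonneg fun _ _ => rpow_nonneg (abs_nonneg _) _),
    Real.norm_of_nonneg (Finset.sum_nonneg fun _ _ => rpow_nonneg (abs_nonneg _) _)]
  exact hprod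

theorem not_ae_restrict_Ico_le_abs {φ : ℝ → ℝ} (hφ : Continuous φ) {l u x₀ : ℝ}
    (hx₀ : x₀ ∈ Set.Ico l u) (h0 : φ x₀ = 0) {ε : ℝ} (hε : 0 < ε) :
    ¬ ∀ᵐ x ∂volume.restrict (Set.Ico l u), ε ≤ |φ x| := by
  intro h
  have hsmall : Set.Ico l u ∩ {x | |φ x| < ε} ∈ nhdsWithin x₀ (Set.Ici x₀) :=
    Filter.inter_mem (Ico_mem_nhdsGE_of_mem hx₀) (mem_nhdsWithin_of_mem_nhds
      ((isOpen_lt hφ.abs continuous_const).mem_nhds (by simpa [h0] using hε)))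
  obtain ⟨b, hb, hsub⟩ := mem_nhdsGE_iff_exists_Ico_subset.1 hsmall
  rw [ae_restrict_iff' measurableSet_Ico] at h
  have hnull : volume (Set.Ico x₀ b) = 0 :=
    measure_mono_null (t := {x | ¬ (x ∈ Set.Ico l u → ε ≤ |φ x|)})
      (fun x hx hxε => not_lt.2 (hxε (hsub hx).1) (hsub hx).2) (ae_iff.1 h)
  simp only [Real.volume_Ico, ENNReal.ofReal_eq_zero, tsub_le_iff_right, zero_add] at hnull
  exact not_lt.2 hnull hb

theorem not_ae_restrict_Ico_abs_rpow_le {φ : ℝ → ℝ} (hφ : Continuous φ) {l u x₀ : ℝ}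
    (hx₀ : x₀ ∈ Set.Ico l u) (h0 : φ x₀ = 0) (hφ0 : ∀ᵐ x, φ x ≠ 0) {a : ℝ} (ha : a < 0)
    (C : ℝ) : ¬ ∀ᵐ x ∂volume.restrict (Set.Ico l u), |φ x| ^ a ≤ C := by
  intro h
  have hC : 0 < max C 1 := lt_max_of_lt_right one_pos
  refine not_ae_restrict_Ico_le_abs hφ hx₀ h0 (rpow_pos_of_pos hC a⁻¹) ?_
  filter_upwards [h, ae_restrict_of_ae hφ0] with x hxC hx
  calc max C 1 ^ a⁻¹ ≤ (|φ x| ^ a) ^ a⁻¹ :=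
        rpow_le_rpow_of_nonpos (rpow_pos_of_pos (abs_pos.2 hx) _) (hxC.trans (le_max_left _ _))
          (inv_nonpos.2 ha.le)
    _ = |φ x| := rpow_rpow_inv (abs_nonneg _) ha.ne

theorem not_ae_restrict_Ico_le_abs_rpow {φ : ℝ → ℝ} (hφ : Continuous φ) {l u x₀ : ℝ}
    (hx₀ : x₀ ∈ Set.Ico l u) (h0 : φ x₀ = 0) {a : ℝ} (ha : 0 < a) {c : ℝ} (hc : 0 < c) :
    ¬ ∀ᵐ x ∂volume.restrict (Set.Ico l u), c ≤ |φ x| ^ a := by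
  intro h
  refine not_ae_restrict_Ico_le_abs hφ hx₀ h0 (rpow_pos_of_pos hc a⁻¹) ?_
  filter_upwards [h] with x hx
  calc c ^ a⁻¹ ≤ (|φ x| ^ a) ^ a⁻¹ := rpow_le_rpow hc.le hx (inv_nonneg.2 ha.le)
    _ = |φ x| := rpow_rpow_inv (abs_nonneg _) ha.ne'

theorem MeasureTheory.Measure.ae_of_ae_prod_fst {α β : Type*} [MeasurableSpace α]
    [MeasurableSpace β] {μ : Measure α} {ν : Measure β} [SFinite ν] (hν : ν ≠ 0)
    {p : α → Prop} (h : ∀ᵐ z ∂μ.prod ν, p z.1) : ∀ᵐ x ∂μ, p x := by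
  have := ae_neBot.2 hν
  filter_upwards [Measure.ae_ae_of_ae_prod h] with x hx
  exact hx.exists.choose_spec

theorem memLp_two_indicator_abs_rpow_half {φ : ℝ → ℝ} (hφ : Measurable φ) {s : Set ℝ}
    (hs : MeasurableSet s) {a : ℝ} (hint : IntegrableOn (fun x => |φ x| ^ a) s) :
    MemLp (s.indicator fun x => ((|φ x| ^ (a / 2) : ℝ) : ℂ)) 2 := by
  rw [memLp_two_iff_integrable_sq_norm (by fun_prop)]
  refine ((integrable_indicator_iff hs).2 hint).congr (.of_forall fun x => ?_)
  by_cases hx : x ∈ s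
  · simp [hx, ← rpow_natCast, ← rpow_mul (abs_nonneg _)]
  · simp [hx]

theorem conditional_gabor_example_general (P : Polynomial ℝ) (hP : P ≠ 0) (a : ℝ)
    (h1 : -1 < (P.natDegree : ℝ) * a)
    (hzero : ∃ x ∈ Set.Ico (0:ℝ) 1, P.eval x = 0)
    (g : ℝ → ℂ)
    (hg : ∀ x, g x = if x ∈ Set.Ico (0:ℝ) 1 then ((|P.eval x| ^ (a / 2) : ℝ) : ℂ) else 0)
    (F : ℝ × ℝ → ℝ) (hF : ∀ z, F z = |P.eval z.1| ^ a) :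
    MemLp g 2 (volume : Measure ℝ) ∧
    IntegrableOn F ((Set.Ico (0:ℝ) 1) ×ˢ (Set.Ico (0:ℝ) 1)) ∧
    (a < 0 → ∀ C : ℝ,
      ¬ (∀ᵐ z ∂(volume.restrict ((Set.Ico (0:ℝ) 1) ×ˢ (Set.Ico (0:ℝ) 1))), F z ≤ C)) ∧
    (0 < a → ∀ c : ℝ, 0 < c →
      ¬ (∀ᵐ z ∂(volume.restrict ((Set.Ico (0:ℝ) 1) ×ˢ (Set.Ico (0:ℝ) 1))), c ≤ F z)) := by
  obtain ⟨x₀, hx₀, hroot⟩ := hzero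
  have hint : IntegrableOn (fun x => |P.eval x| ^ a) (Set.Ico 0 1) :=
    ((P.locallyIntegrable_abs_eval_rpow hP h1).integrableOn_isCompact isCompact_Icc).mono_set
      Set.Ico_subset_Icc_self
  have hsquare : volume.restrict (Set.Ico (0:ℝ) 1 ×ˢ Set.Ico (0:ℝ) 1) =
      (volume.restrict (Set.Ico 0 1)).prod (volume.restrict (Set.Ico 0 1)) := by
    rw [Measure.volume_eq_prod, Measure.prod_restrict]
  have hIco : volume.restrict (Set.Ico (0:ℝ) 1) ≠ 0 := by simp
  have hnonroot : ∀ᵐ x, P.eval x ≠ 0 := (P.finite_setOfPred_isRoot hP).countable.ae_notMem _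
  obtain rfl : g = (Set.Ico 0 1).indicator fun x => ((|P.eval x| ^ (a / 2) : ℝ) : ℂ) :=
    funext fun x => by simp [hg, Set.indicator_apply]
  obtain rfl : F = fun z => |P.eval z.1| ^ a := funext hF
  refine ⟨memLp_two_indicator_abs_rpow_half P.continuous.measurable measurableSet_Ico hint,
    by rw [IntegrableOn, hsquare]; exact hint.comp_fst _, fun ha C h => ?_, fun ha c hc h => ?_⟩
  · exact not_ae_restrict_Ico_abs_rpow_le P.continuous hx₀ hroot hnonroot ha C
      (Measure.ae_of_ae_prod_fst hIco (hsquare ▸ h))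
  · exact not_ae_restrict_Ico_le_abs_rpow P.continuous hx₀ hroot ha hc
      (Measure.ae_of_ae_prod_fst hIco (hsquare ▸ h))

/-- Let `g(x) = χ_{[0,1)}(x) |P(x)|^{a/2}` with `P` a nonzero real polynomial,
`-1 < deg(P)·a < 1`, where `P` has a real zero in `[0,1)` and `a ≠ 0`.  Then
`g ∈ L²(ℝ)`, and `|Zg(x,u)|² = |P(x)|^a` is in `L¹([0,1)²)` but is unbounded on
`[0,1)²` (when `a < 0`), resp. not essentially bounded away from zero (when `a > 0`). -/
theorem conditional_gabor_example (P : Polynomial ℝ) (hP : P ≠ 0) (a : ℝ)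
    (h1 : -1 < (P.natDegree : ℝ) * a) (h2 : (P.natDegree : ℝ) * a < 1)
    (hzero : ∃ x ∈ Set.Ico (0:ℝ) 1, P.eval x = 0) (ha : a ≠ 0)
    (g : ℝ → ℂ)
    (hg : ∀ x, g x = if x ∈ Set.Ico (0:ℝ) 1 then ((|P.eval x| ^ (a / 2) : ℝ) : ℂ) else 0)
    (F : ℝ × ℝ → ℝ) (hF : ∀ z, F z = |P.eval z.1| ^ a) :
    MemLp g 2 (volume : Measure ℝ) ∧
    IntegrableOn F ((Set.Ico (0:ℝ) 1) ×ˢ (Set.Ico (0:ℝ) 1)) ∧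
    (a < 0 → ∀ C : ℝ,
      ¬ (∀ᵐ z ∂(volume.restrict ((Set.Ico (0:ℝ) 1) ×ˢ (Set.Ico (0:ℝ) 1))), F z ≤ C)) ∧
    (0 < a → ∀ c : ℝ, 0 < c →
      ¬ (∀ᵐ z ∂(volume.restrict ((Set.Ico (0:ℝ) 1) ×ˢ (Set.Ico (0:ℝ) 1))), c ≤ F z)) :=
  conditional_gabor_example_general P hP a h1 hzero g hg F hF
end
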